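/- arXiv:2405.18701 — 5 statements merged into one kernel-verified Lean document; each statement's English description precedes it below -/
import Mathlib

section
/- (Converse hyperboloid membership.) Let F₁ = (x₁, y₀, z₀) and F₂ = (x₂, y₀, z₀) be points of ℝ³ with x₁ < x₂, set Υ_x = (x₁+x₂)/2, c_f = ‖F₁ − F₂‖/2, and let a satisfy 0 < a < c_f, b = √(c_f² − a²). If a point p = (x, y, z) ∈ ℝ³ satisfies (x − Υ_x)²/a² − (y − y₀)²/b² − (z − z₀)²/b² = 1 and x ≥ Υ_x, then ‖p − F₁‖ − ‖p − F₂‖ = 2a. -/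
set_option maxHeartbeats 1000000 in
/-- Converse hyperboloid membership: a point on the right-hand sheet of the hyperboloid
of two sheets (the sheet with `x ≥ Υ_x`) has distance difference exactly `2a` to the
two foci `F₁, F₂`. -/
theorem hyperboloid_membership_converse (x₁ x₂ y₀ z₀ x y z a b : ℝ) (h12 : x₁ < x₂)
    (F₁ F₂ p : EuclideanSpace ℝ (Fin 3))
    (hF₁ : F₁ = ![x₁, y₀, z₀]) (hF₂ : F₂ = ![x₂, y₀, z₀]) (hp : p = ![x, y, z])
    (ha : 0 < a) (hac : a < ‖F₁ - F₂‖ / 2)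
    (hb : b = Real.sqrt ((‖F₁ - F₂‖ / 2) ^ 2 - a ^ 2))
    (hmem : (x - (x₁ + x₂) / 2) ^ 2 / a ^ 2 - (y - y₀) ^ 2 / b ^ 2
        - (z - z₀) ^ 2 / b ^ 2 = 1)
    (hx : x ≥ (x₁ + x₂) / 2) :
    ‖p - F₁‖ - ‖p - F₂‖ = 2 * a := by
  have ha0 : a ≠ 0 := ne_of_gt ha
  have hnorm : ‖F₁ - F₂‖ = x₂ - x₁ := by
    rw [EuclideanSpace.norm_eq]
    simp only [Fin.sum_univ_three]
    have e0 : (F₁ - F₂) 0 = x₁ - x₂ := by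
        simp [hF₁, hF₂]
    have e1 : (F₁ - F₂) 1 = y₀ - y₀ := by
        simp [hF₁, hF₂]
    have e2 : (F₁ - F₂) 2 = z₀ - z₀ := by
        simp [hF₁, hF₂]
    rw [e0, e1, e2]
    simp only [Real.norm_eq_abs, sq_abs, sub_self]
    rw [show (x₁ - x₂) ^ 2 + 0 ^ 2 + 0 ^ 2 = (x₂ - x₁) ^ 2 by ring,
      Real.sqrt_sq (by linarith)]
  have hcpos : (0 : ℝ) < (x₂ - x₁) / 2 := by linarith
  have hac' : a < (x₂ - x₁) / 2 := by rw [hnorm] at hac; linarith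
  have hb2 : b ^ 2 = ((x₂ - x₁) / 2) ^ 2 - a ^ 2 := by
    rw [hb, hnorm, Real.sq_sqrt (by nlinarith)]
  have hbpos : 0 < b := by
    rw [hb, hnorm]; apply Real.sqrt_pos.mpr; nlinarith
  have hb0 : b ≠ 0 := ne_of_gt hbpos
  have hXnn : 0 ≤ x - (x₁ + x₂) / 2 := by linarith
  -- key algebraic identity: s * a² = (c² - a²)(X² - a²)
  have h1 : (y - y₀) ^ 2 / b ^ 2 + (z - z₀) ^ 2 / b ^ 2
      = (x - (x₁ + x₂) / 2) ^ 2 / a ^ 2 - 1 := by linarith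
  rw [← add_div, div_eq_iff (pow_ne_zero 2 hb0)] at h1
  have hsa : ((y - y₀) ^ 2 + (z - z₀) ^ 2) * a ^ 2
      = (((x₂ - x₁) / 2) ^ 2 - a ^ 2) * ((x - (x₁ + x₂) / 2) ^ 2 - a ^ 2) := by
    rw [h1, hb2]; field_simp
  have hca : a ^ 2 < ((x₂ - x₁) / 2) ^ 2 := by nlinarith
  have hsann : 0 ≤ ((y - y₀) ^ 2 + (z - z₀) ^ 2) * a ^ 2 := by positivity
  have hX2 : a ^ 2 ≤ (x - (x₁ + x₂) / 2) ^ 2 := by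
    by_contra h
    push_neg at h
    have hneg : (((x₂ - x₁) / 2) ^ 2 - a ^ 2) * ((x - (x₁ + x₂) / 2) ^ 2 - a ^ 2) < 0 :=
      mul_neg_of_pos_of_neg (by linarith) (by linarith)
    rw [hsa] at hsann
    linarith
  have hXa : a ≤ x - (x₁ + x₂) / 2 := by
    have := Real.sqrt_le_sqrt hX2
    rwa [Real.sqrt_sq ha.le, Real.sqrt_sq hXnn] at this
  have hd1 : ‖p - F₁‖ = (x₂ - x₁) / 2 * (x - (x₁ + x₂) / 2) / a + a := by
    rw [EuclideanSpace.norm_eq]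
    simp only [Fin.sum_univ_three]
    have e0 : (p - F₁) 0 = x - x₁ := by
        simp [hp, hF₁]
    have e1 : (p - F₁) 1 = y - y₀ := by
        simp [hp, hF₁]
    have e2 : (p - F₁) 2 = z - z₀ := by
        simp [hp, hF₁]
    rw [e0, e1, e2]
    simp only [Real.norm_eq_abs, sq_abs]
    have key : (x - x₁) ^ 2 + (y - y₀) ^ 2 + (z - z₀) ^ 2
        = ((x₂ - x₁) / 2 * (x - (x₁ + x₂) / 2) / a + a) ^ 2 := by
      rw [div_add' _ _ _ ha0, div_pow, eq_div_iff (pow_ne_zero 2 ha0)]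
      linear_combination hsa
    rw [key, Real.sqrt_sq
      (add_nonneg (div_nonneg (mul_nonneg hcpos.le hXnn) ha.le) ha.le)]
  have hd2 : ‖p - F₂‖ = (x₂ - x₁) / 2 * (x - (x₁ + x₂) / 2) / a - a := by
    rw [EuclideanSpace.norm_eq]
    simp only [Fin.sum_univ_three]
    have e0 : (p - F₂) 0 = x - x₂ := by
        simp [hp, hF₂]
    have e1 : (p - F₂) 1 = y - y₀ := by
        simp [hp, hF₂]
    have e2 : (p - F₂) 2 = z - z₀ := by
        simp [hp, hF₂]
    rw [e0, e1, e2]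
    simp only [Real.norm_eq_abs, sq_abs]
    have key : (x - x₂) ^ 2 + (y - y₀) ^ 2 + (z - z₀) ^ 2
        = ((x₂ - x₁) / 2 * (x - (x₁ + x₂) / 2) / a - a) ^ 2 := by
      rw [div_sub' ha0, div_pow, eq_div_iff (pow_ne_zero 2 ha0)]
      linear_combination hsa
    have hge : 0 ≤ (x₂ - x₁) / 2 * (x - (x₁ + x₂) / 2) / a - a := by
      rw [sub_nonneg, le_div_iff₀ ha]
      nlinarith [mul_le_mul hac'.le hXa ha.le hcpos.le]
    rw [key, Real.sqrt_sq hge]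
  rw [hd1, hd2]; ring
end

section
/- (Region form of the geometric discriminant.) Let F₁ = (x₁, y₀, z₀) and F₂ = (x₂, y₀, z₀) be points of ℝ³ with x₁ < x₂, set Υ_x = (x₁+x₂)/2, c_f = ‖F₁ − F₂‖/2, and let a satisfy 0 < a < c_f, b = √(c_f² − a²). Then for every point p = (x, y, z) ∈ ℝ³: ‖p − F₁‖ − ‖p − F₂‖ ≥ 2a if and only if both (x − Υ_x)²/a² − (y − y₀)²/b² − (z − z₀)²/b² ≥ 1 and x ≥ Υ_x hold. In other words, the region where the distance difference to the two foci is at least 2a is exactly the region delimited by the right-hand sheet of the hyperboloid. -/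
set_option maxHeartbeats 1000000 in
lemma hyp_key (a c u ρ : ℝ) (ha : 0 < a) (hac : a < c) (hρ : 0 ≤ ρ) :
    Real.sqrt ((u + c) ^ 2 + ρ) - Real.sqrt ((u - c) ^ 2 + ρ) ≥ 2 * a ↔
      (u ^ 2 / a ^ 2 - ρ / (c ^ 2 - a ^ 2) ≥ 1 ∧ u ≥ 0) := by
  have hc : 0 < c := ha.trans hac
  have hb2 : 0 < c ^ 2 - a ^ 2 := by nlinarith
  set d₂ := Real.sqrt ((u - c) ^ 2 + ρ) with hd2def
  have hd₂0 : 0 ≤ d₂ := Real.sqrt_nonneg _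
  have hd₂ : d₂ ^ 2 = (u - c) ^ 2 + ρ := Real.sq_sqrt (by positivity)
  clear_value d₂
  have h1 : Real.sqrt ((u + c) ^ 2 + ρ) - d₂ ≥ 2 * a ↔
      2 * a + d₂ ≤ Real.sqrt ((u + c) ^ 2 + ρ) := by
    constructor <;> intro h <;> linarith
  rw [h1, Real.le_sqrt (by positivity) (by positivity)]
  constructor
  · intro h
    have h2 : a * d₂ ≤ c * u - a ^ 2 := by nlinarith
    have hu : 0 ≤ u := by nlinarith
    have h3 : a ^ 2 * ((u - c) ^ 2 + ρ) ≤ (c * u - a ^ 2) ^ 2 := by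
      have := mul_self_le_mul_self (mul_nonneg ha.le hd₂0) h2
      nlinarith
    refine ⟨?_, hu⟩
    rw [ge_iff_le, ← sub_nonneg]
    have he : u ^ 2 / a ^ 2 - ρ / (c ^ 2 - a ^ 2) - 1 =
        ((c ^ 2 - a ^ 2) * u ^ 2 - a ^ 2 * ρ - a ^ 2 * (c ^ 2 - a ^ 2)) /
          (a ^ 2 * (c ^ 2 - a ^ 2)) := by
      field_simp
    rw [he]
    apply div_nonneg _ (by positivity)
    nlinarith
  · rintro ⟨h, hu⟩
    have hX : a ^ 2 * (c ^ 2 - a ^ 2) * 1 ≤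
        a ^ 2 * (c ^ 2 - a ^ 2) * (u ^ 2 / a ^ 2 - ρ / (c ^ 2 - a ^ 2)) :=
      mul_le_mul_of_nonneg_left h (by positivity)
    have hX' : a ^ 2 * (c ^ 2 - a ^ 2) * (u ^ 2 / a ^ 2 - ρ / (c ^ 2 - a ^ 2)) =
        (c ^ 2 - a ^ 2) * u ^ 2 - a ^ 2 * ρ := by
      field_simp
    rw [hX'] at hX
    have hu2 : a ^ 2 ≤ u ^ 2 := by nlinarith
    have hua : a ≤ u := by nlinarith
    have hcu : 0 ≤ c * u - a ^ 2 := by nlinarith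
    have h3 : a ^ 2 * ((u - c) ^ 2 + ρ) ≤ (c * u - a ^ 2) ^ 2 := by nlinarith
    have h2 : a * d₂ ≤ c * u - a ^ 2 := by
      nlinarith [mul_nonneg (mul_nonneg ha.le hd₂0) hcu, sq_nonneg (a * d₂ - (c * u - a ^ 2))]
    have hexp : (2 * a + d₂) ^ 2 = 4 * a ^ 2 + 4 * (a * d₂) + d₂ ^ 2 := by ring
    rw [hexp, hd₂]
    nlinarith [h2]

/-- Region form of the geometric discriminant: the distance difference to the two foci
is at least `2a` iff the point lies in the region delimited by the right-hand sheet of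
the hyperboloid of two sheets. -/
theorem hyperboloid_region_discriminant (x₁ x₂ y₀ z₀ x y z a b : ℝ) (h12 : x₁ < x₂)
    (F₁ F₂ p : EuclideanSpace ℝ (Fin 3))
    (hF₁ : F₁ = ![x₁, y₀, z₀]) (hF₂ : F₂ = ![x₂, y₀, z₀]) (hp : p = ![x, y, z])
    (ha : 0 < a) (hac : a < ‖F₁ - F₂‖ / 2)
    (hb : b = Real.sqrt ((‖F₁ - F₂‖ / 2) ^ 2 - a ^ 2)) :
    ‖p - F₁‖ - ‖p - F₂‖ ≥ 2 * a ↔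
      ((x - (x₁ + x₂) / 2) ^ 2 / a ^ 2 - (y - y₀) ^ 2 / b ^ 2
          - (z - z₀) ^ 2 / b ^ 2 ≥ 1 ∧ x ≥ (x₁ + x₂) / 2) := by
  have hnorm : ‖F₁ - F₂‖ = x₂ - x₁ := by
    rw [EuclideanSpace.norm_eq]
    simp only [PiLp.sub_apply, hF₁, hF₂]
    simp [Fin.sum_univ_three, sq_abs]
    rw [show (x₁ - x₂) ^ 2 = (x₂ - x₁) ^ 2 by ring, Real.sqrt_sq (by linarith)]
  rw [hnorm] at hac hb
  have hac' : a < (x₂ - x₁) / 2 := hac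
  have hc : 0 < (x₂ - x₁) / 2 := ha.trans hac'
  have hb2 : b ^ 2 = ((x₂ - x₁) / 2) ^ 2 - a ^ 2 := by
    rw [hb]
    exact Real.sq_sqrt (by nlinarith)
  have h1 : ‖p - F₁‖ =
      Real.sqrt (((x - (x₁ + x₂) / 2) + (x₂ - x₁) / 2) ^ 2 +
        ((y - y₀) ^ 2 + (z - z₀) ^ 2)) := by
    rw [EuclideanSpace.norm_eq]
    simp only [PiLp.sub_apply, hp, hF₁]
    simp only [Fin.sum_univ_three]
    simp [sq_abs]
    congr 1
    ring
  have h2 : ‖p - F₂‖ =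
      Real.sqrt (((x - (x₁ + x₂) / 2) - (x₂ - x₁) / 2) ^ 2 +
        ((y - y₀) ^ 2 + (z - z₀) ^ 2)) := by
    rw [EuclideanSpace.norm_eq]
    simp only [PiLp.sub_apply, hp, hF₂]
    simp only [Fin.sum_univ_three]
    simp [sq_abs]
    congr 1
    ring
  have key := hyp_key a ((x₂ - x₁) / 2) (x - (x₁ + x₂) / 2)
    ((y - y₀) ^ 2 + (z - z₀) ^ 2) ha hac' (by positivity)
  rw [h1, h2, hb2, key]
  have hsplit : ((y - y₀) ^ 2 + (z - z₀) ^ 2) / (((x₂ - x₁) / 2) ^ 2 - a ^ 2) =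
      (y - y₀) ^ 2 / (((x₂ - x₁) / 2) ^ 2 - a ^ 2) +
        (z - z₀) ^ 2 / (((x₂ - x₁) / 2) ^ 2 - a ^ 2) := add_div _ _ _
  constructor <;> rintro ⟨h, hu⟩ <;>
    exact ⟨by linarith [hsplit], by linarith⟩
end

section
/- (Theorem 2: geometric discriminant for signal path labeling.) Let c > 0, t₀ ∈ ℝ, and let B ∈ ℝ³ (the BS position). Let F₁ = (x₁, y₀, z₀) and F₂ = (x₂, y₀, z₀) be points of ℝ³ with x₁ < x₂, set Υ_x = (x₁+x₂)/2, and suppose the BS-to-tile distance difference 2a := ‖B − F₂‖ − ‖B − F₁‖ satisfies 0 < 2a < ‖F₁ − F₂‖; set c_f = ‖F₁ − F₂‖/2 and b = √(c_f² − a²). For a point p = (x, y, z) ∈ ℝ³ define the ToAs τ₁ = (‖B − F₁‖ + ‖p − F₁‖)/c + t₀ and τ₂ = (‖B − F₂‖ + ‖p − F₂‖)/c + t₀. Then τ₁ ≥ τ₂ if and only if both (x − Υ_x)²/a² − (y − y₀)²/b² − (z − z₀)²/b² ≥ 1 and x ≥ Υ_x. Consequently, given two unlabeled ToAs from tiles F₁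 and F₂, the larger ToA corresponds to F₁ exactly when p lies in this hyperbolic region, and to F₂ otherwise. -/
set_option maxHeartbeats 1000000 in
/-- Sqrt-free core: hyperbola discriminant. -/
lemma key_poly (a cf bb u vy vz d1 d2 : ℝ) (hapos : 0 < a) (hac : a < cf)
    (hbb2 : bb ^ 2 = cf ^ 2 - a ^ 2) (hbbpos : 0 < bb)
    (hd1n : 0 ≤ d1) (hd2n : 0 ≤ d2)
    (hd1sq : d1 ^ 2 = (u + cf) ^ 2 + (vy ^ 2 + vz ^ 2))
    (hd2sq : d2 ^ 2 = (u - cf) ^ 2 + (vy ^ 2 + vz ^ 2)) :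
    d1 - d2 ≥ 2 * a ↔
      (u ^ 2 / a ^ 2 - vy ^ 2 / bb ^ 2 - vz ^ 2 / bb ^ 2 ≥ 1 ∧ u ≥ 0) := by
  have hpos : (0:ℝ) < a ^ 2 * bb ^ 2 := by positivity
  have ratio_iff : (u ^ 2 / a ^ 2 - vy ^ 2 / bb ^ 2 - vz ^ 2 / bb ^ 2 ≥ 1) ↔
      bb ^ 2 * u ^ 2 - a ^ 2 * vy ^ 2 - a ^ 2 * vz ^ 2 ≥ a ^ 2 * bb ^ 2 := by
    have key : u ^ 2 / a ^ 2 - vy ^ 2 / bb ^ 2 - vz ^ 2 / bb ^ 2 - 1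
        = (bb ^ 2 * u ^ 2 - a ^ 2 * vy ^ 2 - a ^ 2 * vz ^ 2 - a ^ 2 * bb ^ 2)
          / (a ^ 2 * bb ^ 2) := by
      field_simp
    rw [ge_iff_le, ge_iff_le, ← sub_nonneg, ← sub_nonneg (a := bb ^ 2 * u ^ 2 - _ - _),
      key, le_div_iff₀ hpos, zero_mul]
  rw [ratio_iff]
  constructor
  · intro h
    have h1 : d2 + 2 * a ≤ d1 := by linarith
    have h2 : (d2 + 2 * a) ^ 2 ≤ d1 ^ 2 := pow_le_pow_left₀ (by positivity) h1 2
    have h3 : a * d2 ≤ cf * u - a ^ 2 := by nlinarith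
    have h4 : 0 ≤ cf * u - a ^ 2 := le_trans (by positivity) h3
    have h5 : (a * d2) ^ 2 ≤ (cf * u - a ^ 2) ^ 2 :=
      pow_le_pow_left₀ (by positivity) h3 2
    constructor
    · nlinarith
    · nlinarith [mul_pos (mul_pos hbbpos hbbpos) hapos]
  · rintro ⟨h, hu⟩
    have hu2 : a ^ 2 ≤ u ^ 2 := by
      nlinarith [pow_pos hbbpos 2, sq_nonneg vy, sq_nonneg vz]
    have hua : a ≤ u := by nlinarith
    have h4 : 0 ≤ cf * u - a ^ 2 := by
      nlinarith [mul_le_mul hac.le hua hapos.le (le_trans hapos.le hac.le)]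
    have h5 : (a * d2) ^ 2 ≤ (cf * u - a ^ 2) ^ 2 := by nlinarith
    have h3 : a * d2 ≤ cf * u - a ^ 2 := by
      have := Real.sqrt_le_sqrt h5
      rwa [Real.sqrt_sq (by positivity), Real.sqrt_sq h4] at this
    have h2 : (d2 + 2 * a) ^ 2 ≤ d1 ^ 2 := by nlinarith
    have h1 : d2 + 2 * a ≤ d1 := by
      have := Real.sqrt_le_sqrt h2
      rwa [Real.sqrt_sq (by positivity), Real.sqrt_sq hd1n] at this
    linarith

/-- Theorem 2: geometric discriminant for signal path labeling. The path via tile `F₁`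
has the larger ToA iff the UE position lies in the region delimited by the right-hand
sheet of the hyperboloid with foci `F₁, F₂` and distance constant
`2a = ‖B − F₂‖ − ‖B − F₁‖`. -/
theorem geometric_discriminant_spl (c t₀ : ℝ) (hc : 0 < c)
    (B : EuclideanSpace ℝ (Fin 3))
    (x₁ x₂ y₀ z₀ x y z a b : ℝ) (h12 : x₁ < x₂)
    (F₁ F₂ p : EuclideanSpace ℝ (Fin 3))
    (hF₁ : F₁ = ![x₁, y₀, z₀]) (hF₂ : F₂ = ![x₂, y₀, z₀]) (hp : p = ![x, y, z])
    (ha : a = (‖B - F₂‖ - ‖B - F₁‖) / 2)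
    (ha₀ : 0 < ‖B - F₂‖ - ‖B - F₁‖) (ha₁ : ‖B - F₂‖ - ‖B - F₁‖ < ‖F₁ - F₂‖)
    (hb : b = Real.sqrt ((‖F₁ - F₂‖ / 2) ^ 2 - a ^ 2)) :
    (‖B - F₁‖ + ‖p - F₁‖) / c + t₀ ≥ (‖B - F₂‖ + ‖p - F₂‖) / c + t₀ ↔
      ((x - (x₁ + x₂) / 2) ^ 2 / a ^ 2 - (y - y₀) ^ 2 / b ^ 2
          - (z - z₀) ^ 2 / b ^ 2 ≥ 1 ∧ x ≥ (x₁ + x₂) / 2) := by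
  have hF12 : ‖F₁ - F₂‖ = x₂ - x₁ := by
    have h1 : ‖F₁ - F₂‖ = Real.sqrt ((x₁ - x₂) ^ 2 + ((y₀ - y₀) ^ 2 + (z₀ - z₀) ^ 2)) := by
      rw [← dist_eq_norm, EuclideanSpace.dist_eq, Fin.sum_univ_three, hF₁, hF₂]
      norm_num [Real.dist_eq, sq_abs, Matrix.cons_val_two, Matrix.tail_cons, Matrix.head_cons]
    rw [h1, show (x₁ - x₂) ^ 2 + ((y₀ - y₀) ^ 2 + (z₀ - z₀) ^ 2) = (x₂ - x₁) ^ 2 by ring,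
      Real.sqrt_sq (by linarith)]
  have hapos : 0 < a := by rw [ha]; linarith
  have hacf : a < (x₂ - x₁) / 2 := by rw [ha]; rw [hF12] at ha₁; linarith
  have hb2 : b ^ 2 = ((x₂ - x₁) / 2) ^ 2 - a ^ 2 := by
    rw [hb, hF12, Real.sq_sqrt (by nlinarith)]
  have hbpos : 0 < b := by
    rw [hb, hF12]
    exact Real.sqrt_pos.mpr (by nlinarith)
  have hp1 : ‖p - F₁‖
      = Real.sqrt (((x - (x₁ + x₂) / 2) + (x₂ - x₁) / 2) ^ 2
          + ((y - y₀) ^ 2 + (z - z₀) ^ 2)) := by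
    rw [← dist_eq_norm, EuclideanSpace.dist_eq, Fin.sum_univ_three, hp, hF₁]
    norm_num [Real.dist_eq, sq_abs, Matrix.cons_val_two, Matrix.tail_cons, Matrix.head_cons]
    ring_nf
  have hp2 : ‖p - F₂‖
      = Real.sqrt (((x - (x₁ + x₂) / 2) - (x₂ - x₁) / 2) ^ 2
          + ((y - y₀) ^ 2 + (z - z₀) ^ 2)) := by
    rw [← dist_eq_norm, EuclideanSpace.dist_eq, Fin.sum_univ_three, hp, hF₂]
    norm_num [Real.dist_eq, sq_abs, Matrix.cons_val_two, Matrix.tail_cons, Matrix.head_cons]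
    ring_nf
  have step1 : (‖B - F₁‖ + ‖p - F₁‖) / c + t₀ ≥ (‖B - F₂‖ + ‖p - F₂‖) / c + t₀ ↔
      ‖p - F₁‖ - ‖p - F₂‖ ≥ 2 * a := by
    rw [ge_iff_le, add_le_add_iff_right, div_le_div_iff_of_pos_right hc, ge_iff_le]
    constructor <;> intro h <;> rw [ha] at * <;> linarith
  rw [step1, hp1, hp2,
    key_poly a ((x₂ - x₁) / 2) b (x - (x₁ + x₂) / 2) (y - y₀) (z - z₀) _ _ hapos hacf hb2
      hbpos (Real.sqrt_nonneg _) (Real.sqrt_nonneg _)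
      (Real.sq_sqrt (by positivity)) (Real.sq_sqrt (by positivity))]
  constructor <;> rintro ⟨h1, h2⟩ <;> exact ⟨h1, by linarith⟩
end

section
/- (Ground-plane geometric discriminant, eqs. (36)–(37).) Let F₁ = (x₁, y₀, z₀) and F₂ = (x₂, y₀, z₀) with x₁ < x₂, Υ_x = (x₁+x₂)/2, c_f = ‖F₁ − F₂‖/2, 0 < a < c_f, b = √(c_f² − a²). Then for every point p = (x, y, 0) on the ground plane z = 0: ‖p − F₁‖ − ‖p − F₂‖ ≥ 2a if and only if both f(x,y) := (x − Υ_x)²/a² − (y − y₀)²/b² − z₀²/b² − 1 ≥ 0 and x ≥ Υ_x. -/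
lemma norm3 (v : EuclideanSpace ℝ (Fin 3)) :
    ‖v‖ = Real.sqrt (v 0 ^ 2 + v 1 ^ 2 + v 2 ^ 2) := by
  rw [EuclideanSpace.norm_eq]
  simp [Fin.sum_univ_three, Real.norm_eq_abs, sq_abs]

set_option maxHeartbeats 1000000 in
lemma real_key (a c u w2 : ℝ) (ha : 0 < a) (hac : a < c) (hw : 0 ≤ w2) :
    Real.sqrt ((u + c) ^ 2 + w2) - Real.sqrt ((u - c) ^ 2 + w2) ≥ 2 * a ↔
      (u ^ 2 * (c ^ 2 - a ^ 2) - a ^ 2 * w2 - a ^ 2 * (c ^ 2 - a ^ 2) ≥ 0 ∧ u ≥ 0) := by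
  have hc : 0 < c := ha.trans hac
  have hcc : 0 < c ^ 2 - a ^ 2 := by nlinarith
  obtain ⟨d₁, hd₁0, hd₁sq, hd₁e⟩ :
      ∃ d : ℝ, 0 ≤ d ∧ d ^ 2 = (u + c) ^ 2 + w2 ∧ Real.sqrt ((u + c) ^ 2 + w2) = d :=
    ⟨Real.sqrt _, Real.sqrt_nonneg _, Real.sq_sqrt (by positivity), rfl⟩
  obtain ⟨d₂, hd₂0, hd₂sq, hd₂e⟩ :
      ∃ d : ℝ, 0 ≤ d ∧ d ^ 2 = (u - c) ^ 2 + w2 ∧ Real.sqrt ((u - c) ^ 2 + w2) = d :=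
    ⟨Real.sqrt _, Real.sqrt_nonneg _, Real.sq_sqrt (by positivity), rfl⟩
  rw [hd₁e, hd₂e]
  have had₂ : 0 ≤ a * d₂ := mul_nonneg ha.le hd₂0
  constructor
  · intro h
    have hsq : d₁ ^ 2 ≥ (2 * a + d₂) ^ 2 := by nlinarith
    have h1 : u * c - a ^ 2 ≥ a * d₂ := by nlinarith
    have hu : u ≥ 0 := by nlinarith
    have h2 : (u * c - a ^ 2) ^ 2 ≥ (a * d₂) ^ 2 := by
      nlinarith [mul_nonneg (sub_nonneg.mpr h1) (by linarith : (0:ℝ) ≤ u * c - a ^ 2 + a * d₂)]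
    have h3 : (a * d₂) ^ 2 = a ^ 2 * ((u - c) ^ 2 + w2) := by rw [mul_pow, hd₂sq]
    refine ⟨by nlinarith [h2, h3], hu⟩
  · rintro ⟨hkey, hu⟩
    have hu2 : a ^ 2 ≤ u ^ 2 := by
      by_contra hlt
      push_neg at hlt
      have t : u ^ 2 * (c ^ 2 - a ^ 2) < a ^ 2 * (c ^ 2 - a ^ 2) :=
        mul_lt_mul_of_pos_right hlt hcc
      have t2 : (0:ℝ) ≤ a ^ 2 * w2 := mul_nonneg (sq_nonneg a) hw
      linarith
    have hua : u ≥ a := by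
      have h := Real.sqrt_le_sqrt hu2
      rwa [Real.sqrt_sq ha.le, Real.sqrt_sq hu] at h
    have hpos : 0 < u * c - a ^ 2 := by
      nlinarith [mul_nonneg (sub_nonneg.mpr hua) hc.le, mul_pos ha (sub_pos.mpr hac)]
    have hsq2 : (a * d₂) ^ 2 ≤ (u * c - a ^ 2) ^ 2 := by
      have e : (u * c - a ^ 2) ^ 2 - (a * d₂) ^ 2
          = u ^ 2 * (c ^ 2 - a ^ 2) - a ^ 2 * w2 - a ^ 2 * (c ^ 2 - a ^ 2) := by
        rw [mul_pow, hd₂sq]; ring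
      linarith
    have h1 : a * d₂ ≤ u * c - a ^ 2 := by
      have h := Real.sqrt_le_sqrt hsq2
      rwa [Real.sqrt_sq had₂, Real.sqrt_sq hpos.le] at h
    have hsq : (2 * a + d₂) ^ 2 ≤ d₁ ^ 2 := by
      have e : d₁ ^ 2 - (2 * a + d₂) ^ 2
          = 4 * (u * c - a ^ 2) - 4 * (a * d₂) + ((u - c) ^ 2 + w2 - d₂ ^ 2) := by
        rw [hd₁sq]; ring
      rw [hd₂sq] at e
      linarith
    have h := Real.sqrt_le_sqrt hsq
    rw [Real.sqrt_sq (by positivity), Real.sqrt_sq hd₁0] at h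
    linarith

/-- Ground-plane geometric discriminant (eqs. (36)–(37)): for a point on the ground
plane `z = 0`, the distance difference to the two foci is at least `2a` iff the
projected two-variable discriminant `f(x,y) ≥ 0` and `x ≥ Υ_x`. -/
theorem ground_plane_geometric_discriminant (x₁ x₂ y₀ z₀ x y a b : ℝ) (h12 : x₁ < x₂)
    (F₁ F₂ p : EuclideanSpace ℝ (Fin 3))
    (hF₁ : F₁ = ![x₁, y₀, z₀]) (hF₂ : F₂ = ![x₂, y₀, z₀]) (hp : p = ![x, y, 0])
    (ha : 0 < a) (hac : a < ‖F₁ - F₂‖ / 2)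
    (hb : b = Real.sqrt ((‖F₁ - F₂‖ / 2) ^ 2 - a ^ 2)) :
    ‖p - F₁‖ - ‖p - F₂‖ ≥ 2 * a ↔
      ((x - (x₁ + x₂) / 2) ^ 2 / a ^ 2 - (y - y₀) ^ 2 / b ^ 2
          - z₀ ^ 2 / b ^ 2 - 1 ≥ 0 ∧ x ≥ (x₁ + x₂) / 2) := by
  have hFF : ‖F₁ - F₂‖ = x₂ - x₁ := by
    rw [norm3]
    simp only [hF₁, hF₂, PiLp.sub_apply, Matrix.cons_val_zero, Matrix.cons_val_one,
      Matrix.head_cons, Matrix.cons_val_two, Matrix.tail_cons]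
    rw [show (x₁ - x₂) ^ 2 + (y₀ - y₀) ^ 2 + (z₀ - z₀) ^ 2 = (x₂ - x₁) ^ 2 by ring]
    exact Real.sqrt_sq (by linarith)
  have hac' : a < (x₂ - x₁) / 2 := by rwa [hFF] at hac
  have hc : (0:ℝ) < (x₂ - x₁) / 2 := ha.trans hac'
  have hb2 : b ^ 2 = ((x₂ - x₁) / 2) ^ 2 - a ^ 2 := by
    rw [hb, hFF, Real.sq_sqrt (by nlinarith)]
  have hbpos : 0 < b := by
    rw [hb]; apply Real.sqrt_pos.mpr; rw [hFF]; nlinarith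
  have hn1 : ‖p - F₁‖ =
      Real.sqrt ((x - (x₁ + x₂) / 2 + (x₂ - x₁) / 2) ^ 2 + ((y - y₀) ^ 2 + z₀ ^ 2)) := by
    rw [norm3]
    simp only [hp, hF₁, PiLp.sub_apply, Matrix.cons_val_zero, Matrix.cons_val_one,
      Matrix.head_cons, Matrix.cons_val_two, Matrix.tail_cons]
    congr 1; ring
  have hn2 : ‖p - F₂‖ =
      Real.sqrt ((x - (x₁ + x₂) / 2 - (x₂ - x₁) / 2) ^ 2 + ((y - y₀) ^ 2 + z₀ ^ 2)) := by
    rw [norm3]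
    simp only [hp, hF₂, PiLp.sub_apply, Matrix.cons_val_zero, Matrix.cons_val_one,
      Matrix.head_cons, Matrix.cons_val_two, Matrix.tail_cons]
    congr 1; ring
  rw [hn1, hn2,
    real_key a ((x₂ - x₁) / 2) (x - (x₁ + x₂) / 2) ((y - y₀) ^ 2 + z₀ ^ 2) ha hac'
      (by positivity)]
  have heq : (x - (x₁ + x₂) / 2) ^ 2 / a ^ 2 - (y - y₀) ^ 2 / b ^ 2 - z₀ ^ 2 / b ^ 2 - 1 =
      ((x - (x₁ + x₂) / 2) ^ 2 * (((x₂ - x₁) / 2) ^ 2 - a ^ 2)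
        - a ^ 2 * ((y - y₀) ^ 2 + z₀ ^ 2)
        - a ^ 2 * (((x₂ - x₁) / 2) ^ 2 - a ^ 2)) / (a ^ 2 * b ^ 2) := by
    rw [← hb2]
    field_simp
    ring
  have habpos : (0:ℝ) < a ^ 2 * b ^ 2 := by positivity
  constructor
  · rintro ⟨h1, h2⟩
    refine ⟨?_, by linarith⟩
    rw [heq]
    exact div_nonneg h1 habpos.le
  · rintro ⟨h1, h2⟩
    rw [heq] at h1
    refine ⟨?_, by linarith⟩
    rcases div_nonneg_iff.mp h1 with ⟨h, _⟩ | ⟨_, h⟩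
    · exact h
    · linarith
end

section
/- (Uniqueness of TDoA-based localization.) Let m ≥ 3 and let r, p₁, …, p_m ∈ ℝ³ be points such that the vectors p₁ − r, …, p_m − r span ℝ³. Suppose two points p, p′ ∈ ℝ³ satisfy ‖p − r‖ = ‖p′ − r‖ and ‖p − p_k‖ − ‖p − r‖ = ‖p′ − p_k‖ − ‖p′ − r‖ for every k ∈ {1,…,m}. Then p = p′. In other words, the common reference distance together with the m range differences determines the position uniquely whenever the anchors span three dimensions (which requires at least K = 4 anchors in total). -/
open scoped RealInnerProductSpace


/-- Uniqueness of TDoA-based localization: the common reference distance together with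
the `m` range differences determines the position uniquely whenever the anchor
directions `P k − r` span `ℝ³`. -/
theorem tdoa_localization_unique (m : ℕ) (hm : 3 ≤ m)
    (r : EuclideanSpace ℝ (Fin 3)) (P : Fin m → EuclideanSpace ℝ (Fin 3))
    (hspan : Submodule.span ℝ (Set.range fun k => P k - r) = ⊤)
    (p p' : EuclideanSpace ℝ (Fin 3))
    (href : ‖p - r‖ = ‖p' - r‖)
    (hdiff : ∀ k, ‖p - P k‖ - ‖p - r‖ = ‖p' - P k‖ - ‖p' - r‖) :
    p = p' := by
  have hPk : ∀ k, ‖p - P k‖ = ‖p' - P k‖ := fun k => by linarith [hdiff k]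
  have hrsq : ‖p - r‖ ^ 2 = ‖p' - r‖ ^ 2 := by rw [href]
  have horth : ∀ k, ⟪P k - r, p - p'⟫ = 0 := by
    intro k
    have hksq : ‖p - P k‖ ^ 2 = ‖p' - P k‖ ^ 2 := by rw [hPk k]
    rw [norm_sub_sq_real, norm_sub_sq_real] at hksq hrsq
    simp only [inner_sub_left, inner_sub_right]
    have h1 : ⟪p, P k⟫ - ⟪p, r⟫ = ⟪p', P k⟫ - ⟪p', r⟫ := by linarith
    have h2 : ⟪P k, p⟫ = ⟪p, P k⟫ := real_inner_comm _ _
    have h3 : ⟪P k, p'⟫ = ⟪p', P k⟫ := real_inner_comm _ _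
    have h4 : ⟪r, p⟫ = ⟪p, r⟫ := real_inner_comm _ _
    have h5 : ⟪r, p'⟫ = ⟪p', r⟫ := real_inner_comm _ _
    linarith
  have hmem : p - p' ∈ (Submodule.span ℝ (Set.range fun k => P k - r))ᗮ := by
    rw [Submodule.mem_orthogonal]
    intro u hu
    induction hu using Submodule.span_induction with
    | mem x hx => obtain ⟨k, rfl⟩ := hx; exact horth k
    | zero => simp
    | add x y _ _ hx hy => rw [inner_add_left, hx, hy, add_zero]
    | smul c x _ hx => rw [inner_smul_left, hx, mul_zero]
  rw [hspan, Submodule.top_orthogonal_eq_bot, Submodule.mem_bot, sub_eq_zero] at hmem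
  exact hmem
end
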